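/- arXiv:2311.09771 — 3 statements merged into one kernel-verified Lean document; each statement's English description precedes it below -/
import Mathlib

section
/- Let c ∈ ℝ and n ≥ 1. If z₁, z₂ are roots of D_{2n}(z;c) = ∏_{j=1}^{2n}(z-(j-1)) + (-1)^n c with equal real parts and z₁ ≠ z₂, then z₂ is the complex conjugate of z₁. -/
/-!
Two roots of `∏ (z - j) + (-1)^n c` have the same product `∏ (z - j)`, hence the same modulus
`∏ ((Re z - j)^2 + (Im z)^2)`. With the real part fixed, this is strictly increasing in
`(Im z)^2`, so the imaginary parts agree up to sign.
-/

open Finset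

theorem Finset.prod_add_strictMonoOn {ι : Type*} {s : Finset ι} (hs : s.Nonempty) {a : ι → ℝ}
    (ha : ∀ i ∈ s, 0 ≤ a i) : StrictMonoOn (fun t => ∏ i ∈ s, (a i + t)) (Set.Ici 0) := by
  intro t₁ (ht₁ : 0 ≤ t₁) t₂ _ h
  dsimp only
  have ht₂ : 0 < t₂ := lt_of_le_of_lt ht₁ h
  by_cases hpos : ∀ i ∈ s, 0 < a i + t₁
  · exact prod_lt_prod_of_nonempty hpos (fun i _ => by linarith) hs
  · obtain ⟨i, hi, hi0⟩ := not_forall₂.mp hpos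
    have hzero : a i + t₁ = 0 := le_antisymm (not_lt.mp hi0) (add_nonneg (ha i hi) ht₁)
    rw [prod_eq_zero hi hzero]
    exact prod_pos fun j hj => add_pos_of_nonneg_of_pos (ha j hj) ht₂

theorem Complex.normSq_prod_sub_ofReal {ι : Type*} (s : Finset ι) (r : ι → ℝ) (z : ℂ) :
    normSq (∏ i ∈ s, (z - r i)) = ∏ i ∈ s, ((z.re - r i) ^ 2 + z.im ^ 2) := by
  rw [map_prod]
  refine prod_congr rfl fun i _ => ?_
  simp only [normSq_apply, sub_re, sub_im, ofReal_re, ofReal_im, sub_zero]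
  ring

theorem Complex.im_sq_eq_of_prod_sub_ofReal_eq {ι : Type*} {s : Finset ι} (hs : s.Nonempty)
    (r : ι → ℝ) {z₁ z₂ : ℂ} (hre : z₁.re = z₂.re)
    (hprod : ∏ i ∈ s, (z₁ - r i) = ∏ i ∈ s, (z₂ - r i)) :
    z₁.im ^ 2 = z₂.im ^ 2 := by
  have hnormSq := congrArg normSq hprod
  rw [normSq_prod_sub_ofReal, normSq_prod_sub_ofReal, hre] at hnormSq
  exact (prod_add_strictMonoOn hs (fun i _ => sq_nonneg (z₂.re - r i))).injOn
    (sq_nonneg z₁.im) (sq_nonneg z₂.im) hnormSq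

theorem Complex.eq_conj_of_re_eq_of_im_sq_eq {z₁ z₂ : ℂ} (hre : z₁.re = z₂.re)
    (him : z₁.im ^ 2 = z₂.im ^ 2) (hne : z₁ ≠ z₂) : z₂ = starRingEnd ℂ z₁ := by
  rcases sq_eq_sq_iff_eq_or_eq_neg.mp him with him | him
  · exact absurd (ext hre him) hne
  · exact ext (by simp [hre]) (by simp [him])

/-- If two distinct roots of `D_{2n}(·;c)` have the same real part, then they are
complex conjugates of each other. -/
theorem stmt6 (n : ℕ) (hn : 1 ≤ n) (c : ℝ) (z₁ z₂ : ℂ)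
    (h1 : (∏ j ∈ range (2*n), (z₁ - j)) + (-1)^n * (c : ℂ) = 0)
    (h2 : (∏ j ∈ range (2*n), (z₂ - j)) + (-1)^n * (c : ℂ) = 0)
    (hre : z₁.re = z₂.re) (hne : z₁ ≠ z₂) :
    z₂ = starRingEnd ℂ z₁ := by
  have hprod : ∏ j ∈ range (2*n), (z₁ - ((j : ℝ) : ℂ))
      = ∏ j ∈ range (2*n), (z₂ - ((j : ℝ) : ℂ)) := by
    push_cast
    linear_combination h1 - h2
  have hs : (range (2*n)).Nonempty := nonempty_range_iff.mpr (by omega)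
  exact Complex.eq_conj_of_re_eq_of_im_sq_eq hre
    (Complex.im_sq_eq_of_prod_sub_ofReal_eq hs _ hre hprod) hne
end

section
/- For every c ∈ ℝ and n ≥ 1, the polynomial D_{2n}(z;c) = ∏_{j=1}^{2n}(z-(j-1)) + (-1)^n c has no root of multiplicity greater than 2. -/
/-!
A root of multiplicity `k ≥ 1` of `p` is a root of multiplicity `k - 1` of `p'`, and adding a
constant does not change the derivative. The derivative of `∏_{j<2n} (X - j)` is separable:
by Rolle's theorem it has a root strictly between any two consecutive roots `j, j + 1`, which
accounts for all `2n - 1` of its roots. Hence every root of `D_{2n}(·;c)` has multiplicity at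
most `2`.
-/

open Polynomial

namespace Polynomial

theorem rootMultiplicity_le_two_of_separable_derivative {R : Type*} [CommRing R] [IsDomain R]
    [CharZero R] {p : R[X]} (hp : (derivative p).Separable) (t : R) :
    p.rootMultiplicity t ≤ 2 := by
  have := p.rootMultiplicity_sub_one_le_derivative_rootMultiplicity t
  have := rootMultiplicity_le_one_of_separable hp t
  omega

theorem separable_derivative_of_card_roots_toFinset_eq_natDegree {p : ℝ[X]}
    (hp : p.natDegree ≠ 0) (hroots : p.roots.toFinset.card = p.natDegree) :
    (derivative p).Separable := by
  have hne : derivative p ≠ 0 := derivative_ne_zero.2 hp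
  have hdistinct : (derivative p).natDegree ≤ (derivative p).roots.toFinset.card := by
    have := card_roots_toFinset_le_derivative p
    rw [natDegree_derivative]
    omega
  have htoFinset := Multiset.toFinset_card_le (derivative p).roots
  have hcard := card_roots' (derivative p)
  refine (nodup_roots_iff_of_splits hne ?_).1 ?_
  · exact splits_iff_card_roots.2 (by omega)
  · exact Multiset.toFinset_card_eq_card_iff_nodup.1 (by omega)

theorem card_roots_toFinset_prod_X_sub_natCast {R : Type*} [CommRing R] [IsDomain R]
    [CharZero R] [DecidableEq R] (m : ℕ) :
    (∏ j ∈ Finset.range m, (X - C (j : R))).roots.toFinset.card = m := by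
  have hprod : ∏ j ∈ Finset.range m, (X - C (j : R)) =
      (((Finset.range m).val.map (Nat.cast : ℕ → R)).map fun a => X - C a).prod := by
    rw [Finset.prod_eq_multiset_prod, Multiset.map_map]
    rfl
  have hnodup : ((Finset.range m).val.map (Nat.cast : ℕ → R)).Nodup :=
    (Finset.range m).nodup.map Nat.cast_injective
  rw [hprod, roots_multiset_prod_X_sub_C, Multiset.toFinset_card_of_nodup hnodup,
    Multiset.card_map, Finset.card_val, Finset.card_range]

theorem separable_derivative_prod_X_sub_natCast {m : ℕ} (hm : m ≠ 0) :
    (derivative (∏ j ∈ Finset.range m, (X - C (j : ℝ)))).Separable := by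
  have hdeg : (∏ j ∈ Finset.range m, (X - C (j : ℝ))).natDegree = m := by
    rw [natDegree_prod_of_monic _ _ fun j _ => monic_X_sub_C _]
    simp only [natDegree_X_sub_C, Finset.sum_const, Finset.card_range, smul_eq_mul, mul_one]
  apply separable_derivative_of_card_roots_toFinset_eq_natDegree (by rwa [hdeg])
  rw [hdeg, card_roots_toFinset_prod_X_sub_natCast]

end Polynomial

/-- `D_{2n}(·;c) = ∏_{j=1}^{2n}(X-(j-1)) + (-1)^n c` has no root of multiplicity
greater than 2. -/
theorem stmt7 (n : ℕ) (hn : 1 ≤ n) (c : ℝ) (z : ℂ) :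
    ((∏ j ∈ Finset.range (2*n), (X - C (j : ℂ))) + C ((-1)^n * (c : ℂ))).rootMultiplicity z
      ≤ 2 := by
  apply rootMultiplicity_le_two_of_separable_derivative
  have hderiv : derivative ((∏ j ∈ Finset.range (2*n), (X - C (j : ℂ))) + C ((-1)^n * (c : ℂ))) =
      (derivative (∏ j ∈ Finset.range (2*n), (X - C (j : ℝ)))).map (algebraMap ℝ ℂ) := by
    rw [derivative_add, derivative_C, add_zero, ← derivative_map, Polynomial.map_prod]
    simp
  rw [hderiv]
  exact (separable_derivative_prod_X_sub_natCast (by omega)).map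
end

section
/- If c ∈ ℝ with |c| < (4n-1)!!/2^{2n}, then the polynomial D_{2n}(z - 1/2; c) = ∏_{j=1}^{2n}(z - 1/2 - (j-1)) + (-1)^n c has no purely imaginary root z ∈ iℝ. -/
/-!
On the line `Re z = 0` every factor `iy - 1/2 - j` of the product has real part `-(j + 1/2)`, so
its modulus is at least `j + 1/2`. Hence the product has modulus at least
`∏_{j<2n} (j + 1/2) = (4n-1)!!/2^{2n} > |c|`, and cannot cancel the constant `(-1)^n c`.
-/

open Finset

lemma prod_range_add_half (m : ℕ) :
    ∏ j ∈ range m, ((j : ℝ) + 1/2) = (∏ j ∈ Icc 1 m, (2*(j : ℝ) - 1)) / 2^m := by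
  induction m with
  | zero => simp
  | succ k ih =>
    rw [prod_range_succ, ih, prod_Icc_succ_top (by omega)]
    push_cast
    field_simp
    ring

lemma add_half_le_norm_I_mul_sub_half_sub (y : ℝ) (j : ℕ) :
    (j : ℝ) + 1/2 ≤ ‖(Complex.I * y - 1/2) - j‖ := by
  have hre : ((Complex.I * y - 1/2) - j).re = -(j + 1/2) := by
    simp only [Complex.sub_re, Complex.mul_re, Complex.I_re, Complex.I_im, Complex.ofReal_re,
      Complex.ofReal_im, Complex.natCast_re, Complex.div_ofNat_re, Complex.one_re]
    ring
  calc (j : ℝ) + 1/2 = |((Complex.I * y - 1/2) - j).re| := by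
        rw [hre, abs_neg, abs_of_pos (by positivity)]
    _ ≤ ‖(Complex.I * y - 1/2) - j‖ := Complex.abs_re_le_norm _

lemma prod_range_add_half_le_norm_prod (y : ℝ) (m : ℕ) :
    ∏ j ∈ range m, ((j : ℝ) + 1/2) ≤ ‖∏ j ∈ range m, ((Complex.I * y - 1/2) - j)‖ := by
  rw [norm_prod]
  exact prod_le_prod (fun j _ => by positivity)
    (fun j _ => add_half_le_norm_I_mul_sub_half_sub y j)

theorem stmt8_general (n : ℕ) (c : ℝ)
    (hc : |c| < (∏ j ∈ Icc 1 (2*n), (2*(j : ℝ) - 1)) / 2^(2*n)) (y : ℝ) :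
    (∏ j ∈ range (2*n), ((Complex.I * y - 1/2) - j)) + (-1)^n * (c : ℂ) ≠ 0 := by
  intro hroot
  have hprod : ∏ j ∈ range (2*n), ((Complex.I * y - 1/2) - j) = -((-1)^n * (c : ℂ)) :=
    eq_neg_of_add_eq_zero_left hroot
  have hnorm : ‖∏ j ∈ range (2*n), ((Complex.I * y - 1/2) - j)‖ = |c| := by
    rw [hprod, norm_neg, norm_mul, norm_pow, norm_neg, norm_one, one_pow, one_mul,
      Complex.norm_real, Real.norm_eq_abs]
  have hbound := prod_range_add_half_le_norm_prod y (2*n)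
  rw [prod_range_add_half, hnorm] at hbound
  linarith

/-- If `|c| < (4n-1)!!/2^{2n}`, then `D_{2n}(z - 1/2; c)` has no purely imaginary root. -/
theorem stmt8 (n : ℕ) (hn : 1 ≤ n) (c : ℝ)
    (hc : |c| < (∏ j ∈ Icc 1 (2*n), (2*(j : ℝ) - 1)) / 2^(2*n)) (y : ℝ) :
    (∏ j ∈ range (2*n), ((Complex.I * y - 1/2) - j)) + (-1)^n * (c : ℂ) ≠ 0 :=
  stmt8_general n c hc y
end
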